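/- For the DGA B above, the chain map g : H*(B) → B defined by 1↦1, u=[a]↦a, v=[ac+ca]↦ac+ca, w=[a(ac+ca)]↦a(ac+ca) admits no right homotopy inverse: there is no chain map f : B → H*(B) with a chain homotopy s satisfying 1 − g∘f = s∘d + d∘s. -/

import Mathlib

/-!
Let `b = e₂⁻¹(0, 1)`. Since `d b = 2c` and `B²` is killed by `2`, we get `s (d b) = 2 s(c) = 0`,
while `d (s b) = 0` because `B¹ = 0`. The homotopy equation then forces `b = g (f b)`, which is
impossible because the image of `g` in degree `2` has vanishing second coordinate.
-/

/-- A differential graded `R`-module (DGM) with differential of degree `+1`. -/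
structure DGM (R : Type) [CommRing R] where
  M : ℤ → Type
  acg : ∀ i, AddCommGroup (M i)
  mod : ∀ i, Module R (M i)
  d : ∀ i, M i →ₗ[R] M (i + 1)
  d_sq : ∀ i, (d (i + 1)).comp (d i) = 0

attribute [instance] DGM.acg DGM.mod

variable {R : Type} [CommRing R]

/-- Transport along an equality of degrees. -/
def DGM.gcast (A : DGM R) {i j : ℤ} (h : i = j) : A.M i →ₗ[R] A.M j := by
  subst h; exact LinearMap.id

/-- The degree-`n` component of `Hom(A,B)`: maps raising degree by `n`. -/
def HomDeg (A B : DGM R) (n : ℤ) : Type := ∀ i : ℤ, A.M i →ₗ[R] B.M (i + n)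

instance (A B : DGM R) (n : ℤ) : AddCommGroup (HomDeg A B n) := by
  unfold HomDeg; infer_instance

/-- The induced differential `∇ f = d_B ∘ f − (−1)^{|f|} f ∘ d_A` on `Hom(A,B)`. -/
def nabla (A B : DGM R) (n : ℤ) (f : HomDeg A B n) : HomDeg A B (n + 1) :=
  fun i =>
    (B.gcast (show i + n + 1 = i + (n + 1) by ring)).comp ((B.d (i + n)).comp (f i))
    - (n.negOnePow : ℤ) •
        (B.gcast (show i + 1 + n = i + (n + 1) by ring)).comp ((f (i + 1)).comp (A.d i))


/-- A chain map of DGMs. -/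
structure ChainMap (A B : DGM R) where
  f : ∀ i, A.M i →ₗ[R] B.M i
  comm : ∀ i, (B.d i).comp (f i) = (f (i + 1)).comp (A.d i)

/-- The induced map `g̃ : Hom(A,A) → Hom(A,B)`, `u ↦ g ∘ u`. -/
def gtilde {A B : DGM R} (g : ChainMap A B) (n : ℤ) (u : HomDeg A A n) : HomDeg A B n :=
  fun i => (g.f (i + n)).comp (u i)


theorem DGM.gcast_symm_gcast (A : DGM R) {i j : ℤ} (h : i = j) (v : A.M i) :
    A.gcast h.symm (A.gcast h v) = v := by
  subst h; rfl

theorem AddEquiv.eq_zsmul_symm_of_apply_eq_mul {M S : Type*} [AddCommGroup M] [Ring S]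
    (e : M ≃+ S) {a : M} {n : ℤ} {k : S} (h : e a = n * k) : a = n • e.symm k :=
  e.injective (by rw [h, map_zsmul, apply_symm_apply, zsmul_eq_mul])

theorem ChainMap.eq_apply_apply_of_homotopy {A B : DGM R} (g : ChainMap A B)
    (f : ChainMap B A) (s : ∀ i : ℤ, B.M i →+ B.M (i - 1))
    {i : ℤ} (hs : ∀ x : B.M i, x - g.f i (f.f i x)
      = B.gcast (show i + 1 - 1 = i by ring) (s (i + 1) (B.d i x))
        + B.gcast (show i - 1 + 1 = i by ring) (B.d (i - 1) (s i x)))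
    [Subsingleton (B.M (i - 1))] {n : ℤ} (htor : ∀ v : B.M i, n • v = 0)
    {x : B.M i} {y : B.M (i + 1)} (hdx : B.d i x = n • y) :
    x = g.f i (f.f i x) := by
  have hsd : B.gcast (show i + 1 - 1 = i by ring) (s (i + 1) (B.d i x)) = 0 := by
    rw [hdx, map_zsmul, map_zsmul, htor]
  have hds : s i x = 0 := Subsingleton.elim _ _
  simpa [hsd, hds, sub_eq_zero] using hs x

/-- for the DGA `B` (with `B¹ = 0`, `B² = ℤ₂a ⊕ ℤ₂b`, `B³ = ℤ₄c` and
`d(b) = 2c`) and the homology-isomorphism-inducing chain map `g : H^*(B) → B`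
(with `H²  = ℤ₂` generated by `u = [a]` and `g(u) = a`), there is no right homotopy
inverse: no chain map `f : B → H^*(B)` and homotopy `s` satisfy `1 − g∘f = sd + ds`. -/
theorem no_right_homotopy_inverse
    (Bc Hc : DGM ℤ)
    (h1 : Subsingleton (Bc.M 1))
    (e2 : Bc.M 2 ≃+ ZMod 2 × ZMod 2)
    (e3 : Bc.M 3 ≃+ ZMod 4)
    (hd2 : ∀ m : Bc.M 2,
      e3 (Bc.gcast (show (2 : ℤ) + 1 = 3 by norm_num) (Bc.d 2 m))
        = 2 * (((e2 m).2.val : ZMod 4)))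
    (eH2 : Hc.M 2 ≃+ ZMod 2)
    (g : ChainMap Hc Bc)
    (hg2 : ∀ h : Hc.M 2, e2 (g.f 2 h) = (eH2 h, 0)) :
    ¬ ∃ (f : ChainMap Bc Hc) (s : ∀ i : ℤ, Bc.M i →ₗ[ℤ] Bc.M (i - 1)),
        ∀ (i : ℤ) (x : Bc.M i),
          x - g.f i (f.f i x)
            = Bc.gcast (show i + 1 - 1 = i by ring) (s (i + 1) (Bc.d i x))
              + Bc.gcast (show i - 1 + 1 = i by ring) (Bc.d (i - 1) (s i x)) := by
  rintro ⟨f, s, hs⟩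
  set b : Bc.M 2 := e2.symm (0, 1)
  have : Subsingleton (Bc.M (2 - 1)) := h1
  have htor : ∀ v : Bc.M 2, (2 : ℤ) • v = 0 := fun v => e2.injective <| by
    rw [map_zsmul, map_zero]
    exact (by decide : ∀ p : ZMod 2 × ZMod 2, (2 : ℤ) • p = 0) _
  have h23 : (2 : ℤ) + 1 = 3 := by norm_num
  have hdb : Bc.d 2 b = (2 : ℤ) • Bc.gcast h23.symm (e3.symm ((e2 b).2.val : ZMod 4)) := by
    rw [← map_zsmul, ← AddEquiv.eq_zsmul_symm_of_apply_eq_mul e3 (by exact_mod_cast hd2 b),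
      DGM.gcast_symm_gcast]
  have hb := congrArg (fun m => (e2 m).2) <|
    g.eq_apply_apply_of_homotopy f (fun i => (s i).toAddMonoidHom) (hs 2) htor hdb
  simp [b, hg2] at hb
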